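/- Let f be an analytic polynomial in two variables of degree at most m in each variable, and let T₀, T₁, R₁ be contractions on a Hilbert space. Then f(T₁,R₁) − f(T₀,R₁) = ∑_{ξ,η ∈ Π_m} Υ_m(conj(ξ)T₁)(T₁ − T₀)Υ_m(conj(η)T₀)·(Δ^{[1]}f)(ξ,η,R₁), where (Δ^{[1]}f)(ζ₁,ζ₂,τ) = (f(ζ₁,τ) − f(ζ₂,τ))/(ζ₁ − ζ₂) for ζ₁ ≠ ζ₂ (divided difference in the first variable), and for a monomial decomposition f(z₁,z₂)=∑ a_{jk} z₁^j z₂^k, f(T,R) := ∑ a_{jk} T^j R^k. -/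

import Mathlib

open Complex Polynomial

/-- The divided difference `(Δφ)(z,w)` of a one-variable polynomial. -/
noncomputable def dividedDiff (φ : Polynomial ℂ) (z w : ℂ) : ℂ :=
  if z = w then (Polynomial.derivative φ).eval z else (φ.eval z - φ.eval w) / (z - w)

/-- `Υ_m(conj(ξ)·T) = (1/m) ∑_{k=0}^{m-1} (conj(ξ) T)^k` for an operator `T`. -/
noncomputable def UpsilonOp {H : Type*} [NormedAddCommGroup H] [NormedSpace ℂ H]
    (m : ℕ) (ξ : ℂ) (T : H →L[ℂ] H) : H →L[ℂ] H :=
  (m : ℂ)⁻¹ • ∑ k ∈ Finset.range m, ((starRingEnd ℂ) ξ • T) ^ k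

/-- `f(T,R) = ∑_{j,k=0}^{m} a_{jk} T^j R^k` for the two-variable analytic polynomial
with coefficients `a j k` (degree at most `m` in each variable); all powers of `T`
are to the left of the powers of `R`. -/
noncomputable def polyOp2 {H : Type*} [NormedAddCommGroup H] [NormedSpace ℂ H]
    (m : ℕ) (a : ℕ → ℕ → ℂ) (T R : H →L[ℂ] H) : H →L[ℂ] H :=
  ∑ j ∈ Finset.range (m + 1), ∑ k ∈ Finset.range (m + 1), a j k • (T ^ j * R ^ k)

/-- The one-variable polynomial `z ↦ ∑_{j=0}^m a_{jk} z^j` (the `k`-th "column" of `f`). -/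
noncomputable def colPoly (m : ℕ) (a : ℕ → ℕ → ℂ) (k : ℕ) : Polynomial ℂ :=
  ∑ j ∈ Finset.range (m + 1), Polynomial.C (a j k) * Polynomial.X ^ j

section Auxiliary

open Finset

lemma abs_eq_one_of_mem (m : ℕ) (hm : 0 < m) {ξ : ℂ} (hξ : ξ ∈ nthRootsFinset m (1 : ℂ)) :
    ‖ξ‖ = 1 := by
  have h := (Polynomial.mem_nthRootsFinset hm (1 : ℂ)).mp hξ
  have h1 : ‖ξ‖ ^ m = 1 := by rw [← norm_pow, h, norm_one]
  rcases lt_trichotomy ‖ξ‖ 1 with hlt | heq | hgt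
  · exact absurd h1 (by nlinarith [pow_lt_one₀ (norm_nonneg ξ) hlt hm.ne'])
  · exact heq
  · exact absurd h1 (by nlinarith [one_lt_pow₀ hgt hm.ne'])

lemma conj_eq_pow (m : ℕ) (hm : 0 < m) {ξ : ℂ} (hξ : ξ ∈ nthRootsFinset m (1 : ℂ)) :
    (starRingEnd ℂ) ξ = ξ ^ (m - 1) := by
  have h := (Polynomial.mem_nthRootsFinset hm (1 : ℂ)).mp hξ
  have habs := abs_eq_one_of_mem m hm hξ
  have hne : ξ ≠ 0 := by
    intro h0; rw [h0] at habs; simp at habs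
  rw [← Complex.inv_eq_conj habs]
  field_simp
  rw [← pow_succ', Nat.sub_add_cancel hm, h]

/-- Sum of `ξ^n` over all m-th roots of unity. -/
lemma sum_pow_nthRoots (m : ℕ) (hm : 0 < m) (n : ℕ) :
    ∑ ξ ∈ nthRootsFinset m (1 : ℂ), ξ ^ n = if m ∣ n then (m : ℂ) else 0 := by
  obtain ⟨ζ, hζ⟩ : ∃ ζ : ℂ, IsPrimitiveRoot ζ m :=
    ⟨_, Complex.isPrimitiveRoot_exp m hm.ne'⟩
  have himg : nthRootsFinset m (1 : ℂ) = (Finset.range m).image (fun i => ζ ^ i) := by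
    haveI : NeZero m := ⟨hm.ne'⟩
    apply Finset.eq_of_subset_of_card_le
    · intro x hx
      obtain ⟨i, hi, rfl⟩ := hζ.eq_pow_of_pow_eq_one ((Polynomial.mem_nthRootsFinset hm (1 : ℂ)).mp hx)
      exact Finset.mem_image.mpr ⟨i, Finset.mem_range.mpr hi, rfl⟩
    · calc #((Finset.range m).image (fun i => ζ ^ i)) ≤ m :=
            le_trans Finset.card_image_le (by simp)
        _ = #(nthRootsFinset m (1 : ℂ)) := (hζ.card_nthRootsFinset).symm
  rw [himg, Finset.sum_image (fun i hi j hj h => hζ.pow_inj (Finset.mem_range.mp hi) (Finset.mem_range.mp hj) h)]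
  have : ∀ i, (ζ ^ i) ^ n = (ζ ^ n) ^ i := fun i => by rw [← pow_mul, mul_comm, pow_mul]
  simp_rw [this]
  by_cases hd : m ∣ n
  · rw [if_pos hd]
    have h1 : ζ ^ n = 1 := (hζ.pow_eq_one_iff_dvd n).mpr hd
    simp [h1]
  · rw [if_neg hd]
    have h1 : ζ ^ n ≠ 1 := fun h => hd ((hζ.pow_eq_one_iff_dvd n).mp h)
    rw [geom_sum_eq h1]
    have : (ζ ^ n) ^ m = 1 := by rw [← pow_mul, mul_comm, pow_mul, hζ.pow_eq_one, one_pow]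
    simp [this]

lemma dvd_iff_eq (m p r : ℕ) (hm : 0 < m) (hp : p < m) (hr : r < m) :
    m ∣ r + (m - 1) * p ↔ r = p := by
  haveI : NeZero m := ⟨hm.ne'⟩
  constructor
  · intro h
    have h2 : ((r + (m - 1) * p : ℕ) : ZMod m) = 0 :=
      (ZMod.natCast_eq_zero_iff _ _).mpr h
    push_cast [Nat.cast_sub hm] at h2
    simp only [ZMod.natCast_self, zero_sub, neg_one_mul, CharP.cast_eq_zero] at h2
    have h3 : (r : ZMod m) = (p : ZMod m) := by linear_combination h2
    have := congrArg ZMod.val h3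
    rwa [ZMod.val_cast_of_lt hr, ZMod.val_cast_of_lt hp] at this
  · rintro rfl
    have h1 : (m - 1) * r = m * r - r := Nat.sub_one_mul m r
    have h2 : r ≤ m * r := Nat.le_mul_of_pos_left r hm
    exact ⟨r, by omega⟩

/-- Orthogonality: `∑_ξ ξ^r conj(ξ)^p`. -/
lemma orth (m : ℕ) (hm : 0 < m) (p r : ℕ) (hp : p < m) (hr : r < m) :
    ∑ ξ ∈ nthRootsFinset m (1 : ℂ), ξ ^ r * ((starRingEnd ℂ) ξ) ^ p =
      if r = p then (m : ℂ) else 0 := by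
  have : ∀ ξ ∈ nthRootsFinset m (1 : ℂ), ξ ^ r * ((starRingEnd ℂ) ξ) ^ p = ξ ^ (r + (m - 1) * p) := by
    intro ξ hξ
    rw [conj_eq_pow m hm hξ, ← pow_mul, ← pow_add]
  rw [Finset.sum_congr rfl this, sum_pow_nthRoots m hm, if_congr (dvd_iff_eq m p r hm hp hr) rfl rfl]


/-- divided difference of a monomial. -/
lemma dividedDiff_pow (j : ℕ) (z w : ℂ) :
    dividedDiff (Polynomial.X ^ j) z w = ∑ p ∈ Finset.range j, z ^ p * w ^ (j - 1 - p) := by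
  unfold dividedDiff
  split_ifs with h
  · subst h
    simp only [Polynomial.derivative_X_pow, Polynomial.eval_mul, Polynomial.eval_natCast,
      Polynomial.eval_pow, Polynomial.eval_X]
    have hc : ∀ p ∈ Finset.range j, z ^ p * z ^ (j - 1 - p) = z ^ (j - 1) := by
      intro p hp
      rw [← pow_add]
      congr 1
      have := Finset.mem_range.mp hp
      omega
    rw [Finset.sum_congr rfl hc]
    simp [Finset.sum_const, nsmul_eq_mul]
  · rw [div_eq_iff (sub_ne_zero.mpr h)]
    simp only [Polynomial.eval_pow, Polynomial.eval_X]
    exact (geom_sum₂_mul z w j).symm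

/-- divided difference is linear over the colPoly decomposition. -/
lemma dividedDiff_colPoly (m : ℕ) (a : ℕ → ℕ → ℂ) (k : ℕ) (z w : ℂ) :
    dividedDiff (colPoly m a k) z w =
      ∑ j ∈ Finset.range (m + 1), a j k * dividedDiff (Polynomial.X ^ j) z w := by
  unfold dividedDiff colPoly
  split_ifs with h
  · simp [Polynomial.derivative_sum, Polynomial.eval_finset_sum]
  · rw [Finset.sum_congr rfl (fun j _ => (mul_div_assoc (a j k) _ _).symm), ← Finset.sum_div]
    congr 1
    simp [Polynomial.eval_finset_sum, ← Finset.sum_sub_distrib, mul_sub]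

/-- telescoping identity. -/
lemma telescope {A : Type*} [Ring A] (X Y : A) (j : ℕ) :
    ∑ p ∈ Finset.range j, X ^ p * (X - Y) * Y ^ (j - 1 - p) = X ^ j - Y ^ j := by
  induction j with
  | zero => simp
  | succ n ih =>
    rw [Finset.sum_range_succ]
    have h1 : ∀ p ∈ Finset.range n, X ^ p * (X - Y) * Y ^ (n + 1 - 1 - p)
        = X ^ p * (X - Y) * Y ^ (n - 1 - p) * Y := by
      intro p hp
      rw [mul_assoc (X ^ p * (X - Y)), ← pow_succ]
      congr 2
      have := Finset.mem_range.mp hp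
      omega
    rw [Finset.sum_congr rfl h1, ← Finset.sum_mul, ih]
    have : n + 1 - 1 - n = 0 := by omega
    rw [this]
    noncomm_ring

/-- weighted sum of Upsilon operators picks out `T^r`. -/
lemma Upsilon_weighted {H : Type*} [NormedAddCommGroup H] [NormedSpace ℂ H]
    (m : ℕ) (hm : 0 < m) (r : ℕ) (hr : r < m) (T : H →L[ℂ] H) :
    ∑ ξ ∈ nthRootsFinset m (1 : ℂ), ξ ^ r • UpsilonOp m ξ T = T ^ r := by
  unfold UpsilonOp
  have key : ∀ ξ, ξ ^ r • ((m : ℂ)⁻¹ • ∑ k ∈ Finset.range m, ((starRingEnd ℂ) ξ • T) ^ k)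
      = (m : ℂ)⁻¹ • ∑ k ∈ Finset.range m, (ξ ^ r * ((starRingEnd ℂ) ξ) ^ k) • T ^ k := by
    intro ξ
    rw [smul_comm, Finset.smul_sum]
    congr 1
    apply Finset.sum_congr rfl
    intro k _
    rw [_root_.smul_pow, smul_smul]
  rw [Finset.sum_congr rfl (fun ξ _ => key ξ), ← Finset.smul_sum, Finset.sum_comm]
  have inner : ∀ k ∈ Finset.range m,
      ∑ ξ ∈ nthRootsFinset m (1 : ℂ), (ξ ^ r * ((starRingEnd ℂ) ξ) ^ k) • T ^ k
      = (if r = k then (m : ℂ) else 0) • T ^ k := by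
    intro k hk
    rw [← Finset.sum_smul, orth m hm k r (Finset.mem_range.mp hk) hr]
  rw [Finset.sum_congr rfl inner]
  have hite : ∀ x ∈ Finset.range m, (if r = x then (m : ℂ) else 0) • T ^ x
      = if x = r then (m : ℂ) • T ^ x else 0 := by
    intro x _
    by_cases hx : x = r
    · subst hx; simp
    · have : ¬(r = x) := fun h => hx h.symm
      simp [hx, this]
  rw [Finset.sum_congr rfl hite,
    Finset.sum_ite_eq' (Finset.range m) r (fun x => (m : ℂ) • T ^ x),
    if_pos (Finset.mem_range.mpr hr), smul_smul,
    inv_mul_cancel₀ (show (m : ℂ) ≠ 0 by exact_mod_cast hm.ne'), one_smul]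

lemma sum_sum_sum_comm {α β γ M : Type*} [AddCommMonoid M] (s : Finset α) (t : Finset β)
    (u : Finset γ) (f : α → β → γ → M) :
    ∑ x ∈ s, ∑ y ∈ t, ∑ z ∈ u, f x y z = ∑ z ∈ u, ∑ x ∈ s, ∑ y ∈ t, f x y z :=
  calc ∑ x ∈ s, ∑ y ∈ t, ∑ z ∈ u, f x y z
      = ∑ x ∈ s, ∑ z ∈ u, ∑ y ∈ t, f x y z :=
        Finset.sum_congr rfl fun _ _ => Finset.sum_comm
    _ = ∑ z ∈ u, ∑ x ∈ s, ∑ y ∈ t, f x y z := Finset.sum_comm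

lemma key_monomial {H : Type*} [NormedAddCommGroup H] [NormedSpace ℂ H]
    (m : ℕ) (hm : 0 < m) (j : ℕ) (hj : j ≤ m) (T₀ T₁ : H →L[ℂ] H) :
    ∑ ξ ∈ nthRootsFinset m (1 : ℂ), ∑ η ∈ nthRootsFinset m (1 : ℂ),
      dividedDiff (Polynomial.X ^ j) ξ η •
        (UpsilonOp m ξ T₁ * (T₁ - T₀) * UpsilonOp m η T₀)
    = T₁ ^ j - T₀ ^ j := by
  have h1 : ∀ ξ η : ℂ, dividedDiff (Polynomial.X ^ j) ξ η •
      (UpsilonOp m ξ T₁ * (T₁ - T₀) * UpsilonOp m η T₀)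
      = ∑ r ∈ Finset.range j, (ξ ^ r • UpsilonOp m ξ T₁) * (T₁ - T₀) *
          (η ^ (j - 1 - r) • UpsilonOp m η T₀) := by
    intro ξ η
    rw [dividedDiff_pow, Finset.sum_smul]
    refine Finset.sum_congr rfl fun r _ => ?_
    simp only [smul_mul_assoc, mul_smul_comm, smul_smul]
    rw [mul_comm (ξ ^ r)]
  rw [Finset.sum_congr rfl fun ξ _ => Finset.sum_congr rfl fun η _ => h1 ξ η,
    sum_sum_sum_comm]
  have h2 : ∀ r ∈ Finset.range j,
      (∑ ξ ∈ nthRootsFinset m (1 : ℂ), ∑ η ∈ nthRootsFinset m (1 : ℂ),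
        (ξ ^ r • UpsilonOp m ξ T₁) * (T₁ - T₀) * (η ^ (j - 1 - r) • UpsilonOp m η T₀))
      = T₁ ^ r * (T₁ - T₀) * T₀ ^ (j - 1 - r) := by
    intro r hr
    have hrj := Finset.mem_range.mp hr
    have hrm : r < m := lt_of_lt_of_le hrj hj
    have hsm : j - 1 - r < m := by omega
    have factor : (∑ ξ ∈ nthRootsFinset m (1 : ℂ), ξ ^ r • UpsilonOp m ξ T₁) * (T₁ - T₀) *
        (∑ η ∈ nthRootsFinset m (1 : ℂ), η ^ (j - 1 - r) • UpsilonOp m η T₀)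
        = ∑ ξ ∈ nthRootsFinset m (1 : ℂ), ∑ η ∈ nthRootsFinset m (1 : ℂ),
          (ξ ^ r • UpsilonOp m ξ T₁) * (T₁ - T₀) * (η ^ (j - 1 - r) • UpsilonOp m η T₀) := by
      rw [Finset.sum_mul, Finset.sum_mul]
      exact Finset.sum_congr rfl fun ξ _ => Finset.mul_sum _ _ _
    rw [← factor, Upsilon_weighted m hm r hrm, Upsilon_weighted m hm _ hsm]
  rw [Finset.sum_congr rfl h2]
  exact telescope T₁ T₀ j


end Auxiliary

open Finset in
/-- for `f` a two-variable analytic polynomial of degree at most `m` in each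
variable and contractions `T₀, T₁, R₁`,
`f(T₁,R₁) − f(T₀,R₁) = ∑_{ξ,η ∈ Π_m} Υ_m(conj(ξ)T₁)(T₁−T₀)Υ_m(conj(η)T₀)·(Δ^{[1]}f)(ξ,η,R₁)`,
where `(Δ^{[1]}f)(ξ,η,R₁) = ∑_{k=0}^m (Δ f(·,k-th column))(ξ,η) R₁^k`. -/
theorem polyOp2_diff_first_var {H : Type*} [NormedAddCommGroup H]
    [InnerProductSpace ℂ H] [CompleteSpace H]
    (m : ℕ) (hm : 0 < m) (a : ℕ → ℕ → ℂ) (T₀ T₁ R₁ : H →L[ℂ] H)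
    (hT₀ : ‖T₀‖ ≤ 1) (hT₁ : ‖T₁‖ ≤ 1) (hR₁ : ‖R₁‖ ≤ 1) :
    polyOp2 m a T₁ R₁ - polyOp2 m a T₀ R₁ =
      ∑ ξ ∈ Polynomial.nthRootsFinset m (1 : ℂ), ∑ η ∈ Polynomial.nthRootsFinset m (1 : ℂ),
        UpsilonOp m ξ T₁ * (T₁ - T₀) * UpsilonOp m η T₀ *
          (∑ k ∈ Finset.range (m + 1), dividedDiff (colPoly m a k) ξ η • R₁ ^ k) := by
  -- rewrite each (ξ,η) term of the RHS
  have hterm : ∀ ξ η : ℂ,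
      UpsilonOp m ξ T₁ * (T₁ - T₀) * UpsilonOp m η T₀ *
        (∑ k ∈ Finset.range (m + 1), dividedDiff (colPoly m a k) ξ η • R₁ ^ k)
      = ∑ k ∈ Finset.range (m + 1), ∑ j ∈ Finset.range (m + 1),
          a j k • (dividedDiff (Polynomial.X ^ j) ξ η •
            (UpsilonOp m ξ T₁ * (T₁ - T₀) * UpsilonOp m η T₀) * R₁ ^ k) := by
    intro ξ η
    rw [Finset.mul_sum]
    refine Finset.sum_congr rfl fun k _ => ?_
    rw [mul_smul_comm, dividedDiff_colPoly, Finset.sum_smul]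
    refine Finset.sum_congr rfl fun j _ => ?_
    rw [mul_smul, smul_mul_assoc]
  rw [Finset.sum_congr rfl fun ξ _ => Finset.sum_congr rfl fun η _ => hterm ξ η]
  -- swap the (ξ,η) sums past (k,j)
  rw [sum_sum_sum_comm]
  have hswap2 : ∀ k ∈ Finset.range (m + 1),
      (∑ ξ ∈ nthRootsFinset m (1 : ℂ), ∑ η ∈ nthRootsFinset m (1 : ℂ),
        ∑ j ∈ Finset.range (m + 1),
          a j k • (dividedDiff (Polynomial.X ^ j) ξ η •
            (UpsilonOp m ξ T₁ * (T₁ - T₀) * UpsilonOp m η T₀) * R₁ ^ k))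
      = ∑ j ∈ Finset.range (m + 1), a j k • ((T₁ ^ j - T₀ ^ j) * R₁ ^ k) := by
    intro k _
    rw [sum_sum_sum_comm]
    refine Finset.sum_congr rfl fun j hj => ?_
    have hjm : j ≤ m := by
      have := Finset.mem_range.mp hj; omega
    calc ∑ ξ ∈ nthRootsFinset m (1 : ℂ), ∑ η ∈ nthRootsFinset m (1 : ℂ),
          a j k • (dividedDiff (Polynomial.X ^ j) ξ η •
            (UpsilonOp m ξ T₁ * (T₁ - T₀) * UpsilonOp m η T₀) * R₁ ^ k)
        = a j k • ((∑ ξ ∈ nthRootsFinset m (1 : ℂ), ∑ η ∈ nthRootsFinset m (1 : ℂ),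
            dividedDiff (Polynomial.X ^ j) ξ η •
              (UpsilonOp m ξ T₁ * (T₁ - T₀) * UpsilonOp m η T₀)) * R₁ ^ k) := by
          rw [Finset.sum_mul, Finset.smul_sum]
          refine Finset.sum_congr rfl fun ξ _ => ?_
          rw [Finset.sum_mul, Finset.smul_sum]
      _ = a j k • ((T₁ ^ j - T₀ ^ j) * R₁ ^ k) := by
          rw [key_monomial m hm j hjm T₀ T₁]
  rw [Finset.sum_congr rfl hswap2]
  -- now compute the LHS
  unfold polyOp2
  rw [← Finset.sum_sub_distrib, Finset.sum_comm]
  refine Finset.sum_congr rfl fun k _ => ?_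
  rw [← Finset.sum_sub_distrib]
  refine Finset.sum_congr rfl fun j _ => ?_
  rw [← smul_sub, ← sub_mul]
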